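/- For any a, b in the free Lie algebra L ⊂ ℝ⟨x,y⟩, the element ∂_x^{tr}(tr(ab)) = μ_flip(∂_x(ab)) lies in L, where μ_flip(c⊗d) = d·c. Consequently, the cyclic partial derivative of any element of F(L) with respect to x is a Lie element. -/

import Mathlib

noncomputable section
open TensorProduct

abbrev A : Type := FreeAlgebra ℝ (Fin 2)
abbrev B : Type := A ⊗[ℝ] A

def X : A := FreeAlgebra.ι ℝ 0
def Y : A := FreeAlgebra.ι ℝ 1

/-- Generator matrices used to define the noncommutative partial derivative `pd d`. -/
def genMat (d i : Fin 2) : Matrix (Fin 2) (Fin 2) B :=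
  !![(Algebra.TensorProduct.includeLeft : A →ₐ[ℝ] B) (FreeAlgebra.ι ℝ i), if i = d then 1 else 0;
     0, Algebra.TensorProduct.includeRight (FreeAlgebra.ι ℝ i)]

def Φmat (d : Fin 2) : A →ₐ[ℝ] Matrix (Fin 2) (Fin 2) B :=
  FreeAlgebra.lift ℝ (genMat d)

/-- The noncommutative partial derivative `∂_x` (for `d = 0`) resp. `∂_y` (for `d = 1`):
on a monomial it splits the word at each occurrence of the letter `d`. -/
def pd (d : Fin 2) (a : A) : B := Φmat d a 0 1

/-- The subspace `[A,A]` spanned by commutators; `tr(A) = A/[A,A]` is the trace space. -/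
def commSub : Submodule ℝ A := Submodule.span ℝ {p : A | ∃ a b : A, p = a * b - b * a}

/-- The trace projection `tr : A → A/[A,A]`. -/
def trc (a : A) : A ⧸ commSub := Submodule.Quotient.mk a

/-- Reversed multiplication `μ_flip : A ⊗ A → A`, `b ⊗ c ↦ c·b`. -/
def flipMul : B →ₗ[ℝ] A :=
  (LinearMap.mul' ℝ A).comp (TensorProduct.comm ℝ A A).toLinearMap

attribute [local instance 100] LieRing.ofAssociativeRing

/-- The free Lie algebra `L ⊂ A`: the smallest Lie subalgebra of `A` (with bracket
`[a,b] = ab − ba`) containing `x` and `y`. -/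
def L : LieSubalgebra ℝ A := LieSubalgebra.lieSpan ℝ A {X, Y}

/-! Put `H a c = μ_flip(∂_x a · (1 ⊗ c))`. The Leibniz rule for `∂_x` and the cyclicity
`μ_flip((u ⊗ 1) t) = μ_flip(t (1 ⊗ u))` give `μ_flip(∂_x(ab)) = H b a + H a b`. Now `H` is linear
in `a`, `H x c = c`, `H y c = 0` and `H [a,b] c = H a [b,c] + H b [c,a]`, so induction over the
Lie span shows `H a c ∈ L` for all `a, c ∈ L`. -/

local notation "incL" => (Algebra.TensorProduct.includeLeft : A →ₐ[ℝ] B)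
local notation "incR" => (Algebra.TensorProduct.includeRight : A →ₐ[ℝ] B)

section PartialDerivative

variable (d : Fin 2)

theorem Φmat_eq (a : A) : Φmat d a = !![incL a, pd d a; 0, incR a] := by
  suffices h : Φmat d a 0 0 = incL a ∧ Φmat d a 1 0 = 0 ∧ Φmat d a 1 1 = incR a by
    rw [Matrix.eta_fin_two (Φmat d a), h.1, h.2.1, h.2.2]; rfl
  induction a using FreeAlgebra.induction with
  | grade0 r =>
    simp [Φmat, Algebra.algebraMap_eq_smul_one, Algebra.TensorProduct.one_def]
  | grade1 i => simp [Φmat, genMat]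
  | mul a b ha hb =>
    simp [map_mul, Matrix.mul_apply, Fin.sum_univ_two, ha.1, ha.2.1, ha.2.2, hb.1, hb.2.1, hb.2.2]
  | add a b ha hb =>
    simp [map_add, ha.1, ha.2.1, ha.2.2, hb.1, hb.2.1, hb.2.2]

theorem pd_mul (a b : A) : pd d (a * b) = incL a * pd d b + pd d a * incR b := by
  conv_lhs => rw [pd, map_mul, Φmat_eq, Φmat_eq]
  simp

theorem pd_ι (i : Fin 2) : pd d (FreeAlgebra.ι ℝ i) = if i = d then 1 else 0 := by
  simp [pd, Φmat, genMat]

theorem pd_add (a b : A) : pd d (a + b) = pd d a + pd d b := by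
  simp [pd]

theorem pd_smul (r : ℝ) (a : A) : pd d (r • a) = r • pd d a := by
  simp [pd]

end PartialDerivative

theorem flipMul_tmul (u v : A) : flipMul (u ⊗ₜ[ℝ] v) = v * u := rfl

theorem flipMul_includeLeft_mul (a : A) (t : B) : flipMul (incL a * t) = flipMul (t * incR a) := by
  induction t using TensorProduct.induction_on with
  | zero => simp
  | tmul u v =>
    simp [Algebra.TensorProduct.tmul_mul_tmul, flipMul_tmul, mul_assoc]
  | add s t hs ht => rw [mul_add, add_mul, map_add, map_add, hs, ht]

/-- For a word `a = u x_d v` this is `v c u`: `c` replaces the letter `x_d`, read cyclically. -/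
def cyclicPartial (d : Fin 2) (a c : A) : A := flipMul (pd d a * incR c)

section CyclicPartial

variable (d : Fin 2)

theorem flipMul_pd_mul (a b : A) :
    flipMul (pd d (a * b)) = cyclicPartial d b a + cyclicPartial d a b := by
  rw [pd_mul, map_add, flipMul_includeLeft_mul]; rfl

theorem cyclicPartial_ι (i : Fin 2) (c : A) :
    cyclicPartial d (FreeAlgebra.ι ℝ i) c = if i = d then c else 0 := by
  split_ifs with h <;> simp [cyclicPartial, pd_ι, h, flipMul_tmul]

theorem cyclicPartial_add (a b c : A) :
    cyclicPartial d (a + b) c = cyclicPartial d a c + cyclicPartial d b c := by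
  simp [cyclicPartial, pd_add, add_mul]

theorem cyclicPartial_smul (r : ℝ) (a c : A) :
    cyclicPartial d (r • a) c = r • cyclicPartial d a c := by
  rw [cyclicPartial, pd_smul, smul_mul_assoc, map_smul]; rfl

theorem cyclicPartial_zero (c : A) : cyclicPartial d 0 c = 0 := by
  simpa using cyclicPartial_smul d 0 0 c

theorem cyclicPartial_sub_right (a c c' : A) :
    cyclicPartial d a (c - c') = cyclicPartial d a c - cyclicPartial d a c' := by
  rw [cyclicPartial, map_sub, mul_sub, map_sub]; rfl

theorem cyclicPartial_commutator (a b c : A) :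
    cyclicPartial d (a * b - b * a) c =
      cyclicPartial d a (b * c - c * b) + cyclicPartial d b (c * a - a * c) := by
  have rotate : ∀ u v w : A, flipMul (incL u * pd d v * incR w) = cyclicPartial d v (w * u) := by
    intro u v w
    rw [mul_assoc, flipMul_includeLeft_mul, mul_assoc, ← map_mul]; rfl
  have leibniz : ∀ u v w : A, cyclicPartial d (u * v) w =
      cyclicPartial d v (w * u) + cyclicPartial d u (v * w) := by
    intro u v w
    rw [cyclicPartial, pd_mul, add_mul, map_add, rotate, mul_assoc, ← map_mul]; rfl
  rw [sub_eq_add_neg, ← neg_one_smul ℝ (b * a), cyclicPartial_add, cyclicPartial_smul, leibniz,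
    leibniz, cyclicPartial_sub_right, cyclicPartial_sub_right]
  module

theorem cyclicPartial_mem_L {a c : A} (ha : a ∈ L) (hc : c ∈ L) : cyclicPartial d a c ∈ L := by
  induction ha using LieSubalgebra.lieSpan_induction generalizing c with
  | mem x hx =>
    obtain rfl | rfl := hx
    · rw [X, cyclicPartial_ι]; split_ifs
      exacts [hc, L.zero_mem]
    · rw [Y, cyclicPartial_ι]; split_ifs
      exacts [hc, L.zero_mem]
  | zero => rw [cyclicPartial_zero]; exact L.zero_mem
  | add x y _ _ hx hy => rw [cyclicPartial_add]; exact L.add_mem (hx hc) (hy hc)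
  | smul r x _ hx => rw [cyclicPartial_smul]; exact L.smul_mem r (hx hc)
  | lie x y hxL hyL hx hy =>
    rw [LieRing.of_associative_ring_bracket, cyclicPartial_commutator]
    exact L.add_mem (hx (L.lie_mem hyL hc)) (hy (L.lie_mem hc hxL))

end CyclicPartial

/-- For Lie elements `a, b ∈ L`, the cyclic partial derivative
`∂_x^{tr}(tr(ab)) = μ_flip(∂_x(ab))` is again a Lie element. -/
theorem cyclic_derivative_of_lie_in_L (a b : A) (ha : a ∈ L) (hb : b ∈ L) :
    flipMul (pd 0 (a * b)) ∈ L := by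
  rw [flipMul_pd_mul]
  exact L.add_mem (cyclicPartial_mem_L 0 hb ha) (cyclicPartial_mem_L 0 ha hb)
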